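/- arXiv:2104.01372 — 2 statements merged into one kernel-verified Lean document; each statement's English description precedes it below -/
import Mathlib

section
/- Let D, D' be barcodes and suppose D' = φ·D for some φ ∈ End(I). Then D' lies in the closure (with respect to the bottleneck metric) of the Aut(I)-orbit of D; more precisely, the path t ↦ ((1-t)Id + tφ)·D is continuous in the bottleneck metric, lies in the Aut(I)-orbit of D for t < 1, and equals D' at t = 1. -/
open scoped Classical ENNReal

/-- Membership in `End(I)`. -/
def MemEndI (φ : ℝ → ℝ) : Prop :=
  ContinuousOn φ (Set.Icc 0 1) ∧ MonotoneOn φ (Set.Icc 0 1) ∧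
    Set.MapsTo φ (Set.Icc 0 1) (Set.Icc 0 1) ∧ φ 0 = 0 ∧ φ 1 = 1

/-- Membership in `Aut(I)`: a continuous strictly increasing bijection of `[0,1]`
fixing the endpoints. -/
def MemAutI (φ : ℝ → ℝ) : Prop :=
  ContinuousOn φ (Set.Icc 0 1) ∧ StrictMonoOn φ (Set.Icc 0 1) ∧
    Set.BijOn φ (Set.Icc 0 1) (Set.Icc 0 1) ∧ φ 0 = 0 ∧ φ 1 = 1

/-- Apply `φ` to both endpoints of a bar, with `φ(∞) = ∞`. -/
noncomputable def barMap (φ : ℝ → ℝ) (bd : ℝ × EReal) : ℝ × EReal :=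
  (φ bd.1, if bd.2 = ⊤ then ⊤ else ((φ bd.2.toReal : ℝ) : EReal))

/-- The action of `End(I)` on barcodes. -/
noncomputable def bact (φ : ℝ → ℝ) (D : Multiset (ℝ × EReal)) : Multiset (ℝ × EReal) :=
  (D.map (barMap φ)).filter fun bd => (bd.1 : EReal) ≠ bd.2

/-- A well-formed barcode. -/
def WFBarcode (D : Multiset (ℝ × EReal)) : Prop :=
  ∀ bd ∈ D, 0 ≤ bd.1 ∧ (bd.1 : EReal) < bd.2 ∧ (bd.2 ≤ ((1 : ℝ) : EReal) ∨ bd.2 = ⊤)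

noncomputable def barLen (p : ℝ × EReal) : ℝ≥0∞ :=
  if p.2 = ⊤ then ⊤ else ENNReal.ofReal (p.2.toReal - p.1)

noncomputable def eDistE (x y : EReal) : ℝ≥0∞ :=
  if x = ⊤ ∧ y = ⊤ then 0
  else if x = ⊤ ∨ y = ⊤ then ⊤
  else ENNReal.ofReal |x.toReal - y.toReal|

noncomputable def barDist (p q : ℝ × EReal) : ℝ≥0∞ :=
  max (ENNReal.ofReal |p.1 - q.1|) (eDistE p.2 q.2)

noncomputable def matchCost (M : Multiset ((ℝ × EReal) × (ℝ × EReal)))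
    (L R : Multiset (ℝ × EReal)) : ℝ≥0∞ :=
  max ((M.map fun pq => barDist pq.1 pq.2).sup)
    (((L + R).map fun p => barLen p / 2).sup)

/-- The bottleneck distance. -/
noncomputable def bottleneck (D D' : Multiset (ℝ × EReal)) : ℝ≥0∞ :=
  sInf {c | ∃ M L R, D = M.map Prod.fst + L ∧ D' = M.map Prod.snd + R ∧
    c = matchCost M L R}

theorem image_in_closure_of_orbit (D : Multiset (ℝ × EReal)) (hD : WFBarcode D)
    (φ : ℝ → ℝ) (hφ : MemEndI φ) (D' : Multiset (ℝ × EReal)) (hD' : D' = bact φ D) :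
    (∀ t ∈ Set.Ico (0 : ℝ) 1, ∃ ψ : ℝ → ℝ, MemAutI ψ ∧
        bact (fun x => (1 - t) * x + t * φ x) D = bact ψ D) ∧
    (bact (fun x => (1 - 1) * x + 1 * φ x) D = D') ∧
    (∀ t₀ ∈ Set.Icc (0 : ℝ) 1, ∀ ε : ℝ, 0 < ε → ∃ δ : ℝ, 0 < δ ∧
      ∀ t ∈ Set.Icc (0 : ℝ) 1, |t - t₀| < δ →
        bottleneck (bact (fun x => (1 - t) * x + t * φ x) D)
          (bact (fun x => (1 - t₀) * x + t₀ * φ x) D) < ENNReal.ofReal ε) := by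
  obtain ⟨hcont, hmono, hmaps, h0, h1⟩ := hφ
  -- basic facts about the interpolation maps
  set f : ℝ → ℝ → ℝ := fun t x => (1 - t) * x + t * φ x with hf
  have hf0 : ∀ t, f t 0 = 0 := by
    intro t; show (1 - t) * 0 + t * φ 0 = 0; rw [h0]; ring
  have hf1 : ∀ t, f t 1 = 1 := by
    intro t; show (1 - t) * 1 + t * φ 1 = 1; rw [h1]; ring
  have hfc : ∀ t, ContinuousOn (f t) (Set.Icc 0 1) := by
    intro t
    exact (continuousOn_const.mul continuousOn_id).add (continuousOn_const.mul hcont)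
  have hfmaps : ∀ t ∈ Set.Icc (0:ℝ) 1, Set.MapsTo (f t) (Set.Icc 0 1) (Set.Icc 0 1) := by
    intro t ht x hx
    have hφx := hmaps hx
    obtain ⟨hx0, hx1⟩ := hx
    obtain ⟨hp0, hp1⟩ := hφx
    obtain ⟨ht0, ht1⟩ := ht
    constructor
    · show (0:ℝ) ≤ (1 - t) * x + t * φ x
      nlinarith
    · show (1 - t) * x + t * φ x ≤ 1
      nlinarith
  have hfsm : ∀ t ∈ Set.Ico (0:ℝ) 1, StrictMonoOn (f t) (Set.Icc 0 1) := by
    intro t ht x hx y hy hxy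
    have h1' := hmono hx hy hxy.le
    have h2' : (1 - t) * x < (1 - t) * y := by
      have : (0:ℝ) < 1 - t := by linarith [ht.2]
      nlinarith
    have : t * φ x ≤ t * φ y := by nlinarith [ht.1]
    simp only [hf]
    linarith
  refine ⟨?_, ?_, ?_⟩
  · -- part 1 : for t < 1 the map itself is in Aut(I)
    intro t ht
    refine ⟨f t, ⟨hfc t, hfsm t ht, ?_, hf0 t, hf1 t⟩, rfl⟩
    refine ⟨hfmaps t ⟨ht.1, ht.2.le⟩, (hfsm t ht).injOn, ?_⟩
    intro y hy
    have hsub := intermediate_value_Icc (by norm_num : (0:ℝ) ≤ 1) (hfc t)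
    rw [hf0 t, hf1 t] at hsub
    exact hsub hy
  · -- part 2
    have : (fun x => (1 - (1:ℝ)) * x + 1 * φ x) = φ := by funext x; ring
    rw [this, hD']
  · -- part 3 : continuity
    intro t₀ ht₀ ε hε
    -- Lipschitz constant
    set S : Multiset ℝ :=
      D.map (fun bd => |bd.1 - φ bd.1| + |bd.2.toReal - φ bd.2.toReal|) with hS
    have hSnn : ∀ x ∈ S, (0:ℝ) ≤ x := by
      intro x hx
      obtain ⟨bd, _, rfl⟩ := Multiset.mem_map.1 hx
      positivity
    set C : ℝ := 1 + S.sum with hC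
    have hC1 : (1:ℝ) ≤ C := by
      have := Multiset.sum_nonneg hSnn
      simp [hC]; linarith
    have hC0 : (0:ℝ) < C := by linarith
    have hCb : ∀ bd ∈ D, |bd.1 - φ bd.1| ≤ C ∧ |bd.2.toReal - φ bd.2.toReal| ≤ C := by
      intro bd hbd
      have hm : |bd.1 - φ bd.1| + |bd.2.toReal - φ bd.2.toReal| ≤ S.sum :=
        Multiset.single_le_sum hSnn _ (Multiset.mem_map_of_mem _ hbd)
      constructor
      · have := abs_nonneg (bd.2.toReal - φ bd.2.toReal); simp [hC]; linarith
      · have := abs_nonneg (bd.1 - φ bd.1); simp [hC]; linarith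
    refine ⟨ε / C, div_pos hε hC0, ?_⟩
    intro t ht hδ
    have hM0 : (0:ℝ) ≤ |t - t₀| * C := by positivity
    -- the pointwise bound
    have hpt : ∀ s s' x : ℝ, |x - φ x| ≤ C → |f s x - f s' x| ≤ |s - s'| * C := by
      intro s s' x hx
      have he : f s x - f s' x = (s' - s) * (x - φ x) := by simp [hf]; ring
      rw [he, abs_mul, abs_sub_comm s' s]
      exact mul_le_mul_of_nonneg_left hx (abs_nonneg _)
    -- survival predicates
    set P : (ℝ → ℝ) → (ℝ × EReal) → Prop :=
      fun g bd => ((barMap g bd).1 : EReal) ≠ (barMap g bd).2 with hP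
    have bact_eq : ∀ g : ℝ → ℝ, bact g D = (D.filter (P g)).map (barMap g) := by
      intro g
      simp only [bact, Multiset.filter_map]
      rfl
    set Db : Multiset (ℝ × EReal) := (D.filter (P (f t))).filter (P (f t₀)) with hDb
    set Dl : Multiset (ℝ × EReal) := (D.filter (P (f t))).filter (fun bd => ¬ P (f t₀) bd) with hDl
    set Dr : Multiset (ℝ × EReal) := (D.filter (P (f t₀))).filter (fun bd => ¬ P (f t) bd) with hDr
    have hsplit1 : D.filter (P (f t)) = Db + Dl := (Multiset.filter_add_not _ _).symm
    have hsplit2 : D.filter (P (f t₀)) = Db + Dr := by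
      have h2 : (D.filter (P (f t₀))).filter (P (f t)) = Db := by
        rw [hDb, Multiset.filter_filter, Multiset.filter_filter]
        exact Multiset.filter_congr (fun a _ => and_comm)
      calc D.filter (P (f t₀))
          = (D.filter (P (f t₀))).filter (P (f t)) + Dr := (Multiset.filter_add_not _ _).symm
        _ = Db + Dr := by rw [h2]
    set M : Multiset ((ℝ × EReal) × (ℝ × EReal)) :=
      Db.map (fun bd => (barMap (f t) bd, barMap (f t₀) bd)) with hM
    set L : Multiset (ℝ × EReal) := Dl.map (barMap (f t)) with hL
    set R : Multiset (ℝ × EReal) := Dr.map (barMap (f t₀)) with hR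
    have hleft : bact (f t) D = M.map Prod.fst + L := by
      rw [bact_eq, hsplit1, Multiset.map_add, hM, Multiset.map_map, hL]
      rfl
    have hright : bact (f t₀) D = M.map Prod.snd + R := by
      rw [bact_eq, hsplit2, Multiset.map_add, hM, Multiset.map_map, hR]
      rfl
    -- cost bound
    have hmemD_b : ∀ bd ∈ Db, bd ∈ D := by
      intro bd hbd
      exact Multiset.mem_of_mem_filter (Multiset.mem_of_mem_filter hbd)
    have hmemD_l : ∀ bd ∈ Dl, bd ∈ D := by
      intro bd hbd
      exact Multiset.mem_of_mem_filter (Multiset.mem_of_mem_filter hbd)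
    have hmemD_r : ∀ bd ∈ Dr, bd ∈ D := by
      intro bd hbd
      exact Multiset.mem_of_mem_filter (Multiset.mem_of_mem_filter hbd)
    have hcost : matchCost M L R ≤ ENNReal.ofReal (|t - t₀| * C) := by
      rw [matchCost]
      refine max_le (Multiset.sup_le.2 ?_) (Multiset.sup_le.2 ?_)
      · intro c hc
        obtain ⟨pq, hpq, rfl⟩ := Multiset.mem_map.1 hc
        obtain ⟨bd, hbd, rfl⟩ := Multiset.mem_map.1 hpq
        have hbdD := hmemD_b bd hbd
        obtain ⟨hb1, hb2⟩ := hCb bd hbdD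
        rw [barDist]
        refine max_le ?_ ?_
        · exact ENNReal.ofReal_le_ofReal (hpt t t₀ bd.1 hb1)
        · by_cases htop : bd.2 = ⊤
          · simp [barMap, htop, eDistE]
          · simp only [barMap, htop, if_neg, eDistE, EReal.coe_ne_top, and_self,
              if_false, or_self, EReal.toReal_coe]
            exact ENNReal.ofReal_le_ofReal (hpt t t₀ bd.2.toReal hb2)
      · intro c hc
        obtain ⟨p, hp, rfl⟩ := Multiset.mem_map.1 hc
        rw [Multiset.mem_add] at hp
        -- in both cases, p is the image of a bar killed by the other map
        have key : ∀ (s s' : ℝ), |s - s'| = |t - t₀| →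
            ∀ bd ∈ D, ¬ P (f s') bd →
            barLen (barMap (f s) bd) / 2 ≤ ENNReal.ofReal (|t - t₀| * C) := by
          intro s s' hss' bd hbd hkill
          obtain ⟨hb1, hb2⟩ := hCb bd hbd
          simp only [hP, not_not, barMap] at hkill
          by_cases htop : bd.2 = ⊤
          · rw [if_pos htop] at hkill
            exact absurd hkill (EReal.coe_ne_top _)
          · rw [if_neg htop] at hkill
            have hkill' : f s' bd.1 = f s' bd.2.toReal := by exact_mod_cast hkill
            have e1 : |f s bd.1 - f s' bd.1| ≤ |t - t₀| * C := by
              have := hpt s s' bd.1 hb1; rw [hss'] at this; exact this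
            have e2 : |f s bd.2.toReal - f s' bd.2.toReal| ≤ |t - t₀| * C := by
              have := hpt s s' bd.2.toReal hb2; rw [hss'] at this; exact this
            have hlen : f s bd.2.toReal - f s bd.1 ≤ 2 * (|t - t₀| * C) := by
              have a1 := abs_le.1 e1
              have a2 := abs_le.1 e2
              rw [hkill'] at a1
              linarith [a1.1, a1.2, a2.1, a2.2]
            have hblen : barLen (barMap (f s) bd) =
                ENNReal.ofReal (f s bd.2.toReal - f s bd.1) := by
              simp [barLen, barMap, htop]
            rw [hblen, show ((2:ℝ≥0∞)) = ENNReal.ofReal 2 by simp,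
              ← ENNReal.ofReal_div_of_pos (by norm_num)]
            refine ENNReal.ofReal_le_ofReal ?_
            have hfb : f s bd.1 = (1 - s) * bd.1 + s * φ bd.1 := rfl
            have hfd : f s bd.2.toReal = (1 - s) * bd.2.toReal + s * φ bd.2.toReal := rfl
            rw [hfb, hfd] at hlen ⊢
            generalize hAg : |t - t₀| * C = A at hlen ⊢
            linarith
        rcases hp with hp | hp
        · obtain ⟨bd, hbd, rfl⟩ := Multiset.mem_map.1 hp
          exact key t t₀ rfl bd (hmemD_l bd hbd) (Multiset.mem_filter.1 hbd).2
        · obtain ⟨bd, hbd, rfl⟩ := Multiset.mem_map.1 hp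
          exact key t₀ t (abs_sub_comm t₀ t) bd (hmemD_r bd hbd) (Multiset.mem_filter.1 hbd).2
    have hbot : bottleneck (bact (f t) D) (bact (f t₀) D) ≤ ENNReal.ofReal (|t - t₀| * C) := by
      refine le_trans (sInf_le ⟨M, L, R, hleft, hright, rfl⟩) hcost
    refine lt_of_le_of_lt hbot ?_
    rw [ENNReal.ofReal_lt_ofReal_iff hε]
    calc |t - t₀| * C < (ε / C) * C := by
          exact mul_lt_mul_of_pos_right hδ hC0
      _ = ε := div_mul_cancel₀ ε (ne_of_gt hC0)
end

section
/- Let D, D' be barcodes with D' = φ·D for some φ ∈ End(I), and let φ₀, φ₁ ∈ End(I) both satisfy φ₀·D = φ₁·D = D'. If for every bar (b,d) ∈ D and every bar (b',d') ∈ D' one has (φ₀(b),φ₀(d)) = (b',d') if and only if (φ₁(b),φ₁(d)) = (b',d'), then for every t ∈ [0,1] the interpolation φ_t := tφ₀ + (1-t)φ₁ also satisfies φ_t·D = D'. -/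
open scoped Classical

theorem interpolation_of_matching_morphisms
    (D D' : Multiset (ℝ × EReal)) (hD : WFBarcode D)
    (φ₀ φ₁ : ℝ → ℝ) (h0 : MemEndI φ₀) (h1 : MemEndI φ₁)
    (e0 : bact φ₀ D = D') (e1 : bact φ₁ D = D')
    (hmatch : ∀ bd ∈ D, ∀ b' ∈ D', (barMap φ₀ bd = b' ↔ barMap φ₁ bd = b')) :
    ∀ t ∈ Set.Icc (0 : ℝ) 1,
      bact (fun x => t * φ₀ x + (1 - t) * φ₁ x) D = D' := by
  intro t _
  set ψ : ℝ → ℝ := fun x => t * φ₀ x + (1 - t) * φ₁ x with hψ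
  -- Key dichotomy: either φ₁ agrees with φ₀ on the bar, or the bar is
  -- degenerate under both φ₀ and φ₁ (and in particular finite).
  have key : ∀ bd ∈ D, barMap φ₁ bd = barMap φ₀ bd ∨
      (bd.2 ≠ ⊤ ∧ φ₀ bd.1 = φ₀ bd.2.toReal ∧ φ₁ bd.1 = φ₁ bd.2.toReal) := by
    intro bd hbd
    by_cases hdeg : ((barMap φ₀ bd).1 : EReal) = (barMap φ₀ bd).2
    · right
      have htop : bd.2 ≠ ⊤ := by
        intro h
        simp [barMap, h] at hdeg
      have h0' : φ₀ bd.1 = φ₀ bd.2.toReal := by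
        simp only [barMap, if_neg htop] at hdeg
        exact_mod_cast hdeg
      refine ⟨htop, h0', ?_⟩
      by_cases hdeg1 : ((barMap φ₁ bd).1 : EReal) = (barMap φ₁ bd).2
      · simp only [barMap, if_neg htop] at hdeg1
        exact_mod_cast hdeg1
      · exfalso
        have hmem : barMap φ₁ bd ∈ D' := by
          rw [← e1]
          exact Multiset.mem_filter.2 ⟨Multiset.mem_map_of_mem _ hbd, hdeg1⟩
        have heq : barMap φ₀ bd = barMap φ₁ bd := (hmatch bd hbd _ hmem).2 rfl
        rw [heq] at hdeg
        exact hdeg1 hdeg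
    · left
      have hmem : barMap φ₀ bd ∈ D' := by
        rw [← e0]
        exact Multiset.mem_filter.2 ⟨Multiset.mem_map_of_mem _ hbd, hdeg⟩
      exact (hmatch bd hbd _ hmem).1 rfl
  have agree : ∀ x, φ₁ x = φ₀ x → ψ x = φ₀ x := by
    intro x h
    simp only [hψ, h]; ring
  have keyψ : ∀ bd ∈ D, barMap φ₁ bd = barMap φ₀ bd → barMap ψ bd = barMap φ₀ bd := by
    intro bd _ heq
    have h1 : φ₁ bd.1 = φ₀ bd.1 := congrArg Prod.fst heq
    have h2 := congrArg Prod.snd heq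
    simp only [barMap] at h2 ⊢
    refine Prod.ext (agree _ h1) ?_
    by_cases htop : bd.2 = ⊤
    · simp [htop]
    · simp only [if_neg htop] at h2 ⊢
      have : φ₁ bd.2.toReal = φ₀ bd.2.toReal := by exact_mod_cast h2
      exact_mod_cast congrArg (fun r : ℝ => (r : EReal)) (agree _ this)
  rw [← e0]
  unfold bact
  rw [Multiset.filter_map, Multiset.filter_map]
  have hfeq : D.filter ((fun bd => (bd.1 : EReal) ≠ bd.2) ∘ barMap ψ) =
      D.filter ((fun bd => (bd.1 : EReal) ≠ bd.2) ∘ barMap φ₀) := by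
    apply Multiset.filter_congr
    intro bd hbd
    rcases key bd hbd with heq | ⟨htop, h0', h1'⟩
    · simp only [Function.comp_apply, keyψ bd hbd heq]
    · have hψdeg : ψ bd.1 = ψ bd.2.toReal := by
        simp only [hψ, h0', h1']
      simp only [Function.comp_apply, barMap, if_neg htop, ne_eq, EReal.coe_eq_coe_iff,
        hψdeg, h0', not_true_eq_false]
  rw [hfeq]
  apply Multiset.map_congr rfl
  intro bd hbd
  have hbd' := Multiset.mem_filter.1 hbd
  rcases key bd hbd'.1 with heq | ⟨htop, h0', _⟩
  · exact keyψ bd hbd'.1 heq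
  · exact absurd (by simp [barMap, if_neg htop, h0']) hbd'.2
end
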